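/- arXiv:2101.00935 — 4 statements merged into one kernel-verified Lean document; each statement's English description precedes it below -/
import Mathlib

section
/- Let f be convex and differentiable with Hölder continuous gradient of exponent ν ∈ [0,1] and constant L_ν, i.e. ‖∇f(x) − ∇f(y)‖ ≤ L_ν‖x − y‖^ν. Then for any δ > 0 and any L ≥ ((1−ν)/((1+ν)δ))^((1−ν)/(1+ν)) · L_ν^(2/(1+ν)), it holds for all x, y that f(y) ≤ f(x) + ⟨∇f(x), y − x⟩ + (L/2)‖y − x‖² + δ. -/
/-!
Comparing `t ↦ f (x + t • (y - x))` with its Hölder majorant on `[0, 1]` gives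
`f y ≤ f x + ⟪f' x, y - x⟫ + Lν / (1 + ν) * ‖y - x‖ ^ (1 + ν)`. Weighted AM–GM with weights
`(1 + ν) / 2` and `(1 - ν) / 2` then bounds this power of `‖y - x‖` by `L / 2 * ‖y - x‖ ^ 2 + δ / 2`
as soon as `L` exceeds the stated threshold.
-/

open RealInnerProductSpace

section HolderDescent

variable {E : Type*} [NormedAddCommGroup E] [InnerProductSpace ℝ E]

theorem HasGradientAt.hasDerivAt_comp_add_smul [CompleteSpace E] {f : E → ℝ} {g x v : E} {t : ℝ}
    (hf : HasGradientAt f g (x + t • v)) :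
    HasDerivAt (fun s : ℝ => f (x + s • v)) ⟪g, v⟫ t := by
  have hline : HasDerivAt (fun s : ℝ => x + s • v) v t := by
    simpa using ((hasDerivAt_id t).smul_const v).const_add x
  simpa [InnerProductSpace.toDual_apply_apply, Function.comp_def] using
    hf.hasFDerivAt.comp_hasDerivAt t hline

theorem inner_sub_le_mul_rpow_of_holder {f' : E → E} {ν Lν : ℝ} (hν : 0 ≤ ν)
    (hhold : ∀ x y, ‖f' x - f' y‖ ≤ Lν * ‖x - y‖ ^ ν) (x v : E) {t : ℝ} (ht : 0 ≤ t) :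
    ⟪f' (x + t • v) - f' x, v⟫ ≤ Lν * ‖v‖ ^ (1 + ν) * t ^ ν :=
  calc ⟪f' (x + t • v) - f' x, v⟫ ≤ ‖f' (x + t • v) - f' x‖ * ‖v‖ := real_inner_le_norm _ _
    _ ≤ Lν * ‖x + t • v - x‖ ^ ν * ‖v‖ := by gcongr; exact hhold _ _
    _ = Lν * ‖v‖ ^ (1 + ν) * t ^ ν := by
      rw [add_sub_cancel_left, norm_smul, Real.norm_of_nonneg ht,
        Real.mul_rpow ht (norm_nonneg v), Real.rpow_add' (norm_nonneg v) ?_, Real.rpow_one]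
      · ring
      positivity

theorem le_add_inner_add_rpow_of_holder [CompleteSpace E] {f : E → ℝ} {f' : E → E} {ν Lν : ℝ}
    (hν : 0 ≤ ν) (hgrad : ∀ x, HasGradientAt f (f' x) x)
    (hhold : ∀ x y, ‖f' x - f' y‖ ≤ Lν * ‖x - y‖ ^ ν) (x y : E) :
    f y ≤ f x + ⟪f' x, y - x⟫ + Lν / (1 + ν) * ‖y - x‖ ^ (1 + ν) := by
  set v := y - x
  have hν1 : 1 ≤ 1 + ν := by linarith
  have hφ (t : ℝ) : HasDerivAt (fun s : ℝ => f (x + s • v) - s * ⟪f' x, v⟫)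
      (⟪f' (x + t • v), v⟫ - ⟪f' x, v⟫) t :=
    (hgrad _).hasDerivAt_comp_add_smul.sub (hasDerivAt_mul_const _)
  have hB (t : ℝ) : HasDerivAt (fun s : ℝ => f x + Lν / (1 + ν) * ‖v‖ ^ (1 + ν) * s ^ (1 + ν))
      (Lν * ‖v‖ ^ (1 + ν) * t ^ ν) t := by
    refine (((Real.hasDerivAt_rpow_const (Or.inr hν1)).const_mul _).const_add _).congr_deriv ?_
    rw [add_sub_cancel_left]
    field_simp
  have hcomp := image_le_of_deriv_right_le_deriv_boundary (a := 0) (b := 1)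
    (fun t _ => (hφ t).continuousAt.continuousWithinAt) (fun t _ => (hφ t).hasDerivWithinAt)
    (by simp [Real.zero_rpow (by linarith : (1 + ν) ≠ 0)])
    (fun t _ => (hB t).continuousAt.continuousWithinAt) (fun t _ => (hB t).hasDerivWithinAt)
    (fun t ht => by
      rw [← inner_sub_left]; exact inner_sub_le_mul_rpow_of_holder hν hhold x v ht.1)
    (Set.right_mem_Icc.2 zero_le_one)
  simp only [one_smul, one_mul, Real.one_rpow, mul_one, show x + v = y from add_sub_cancel x y]
    at hcomp
  linarith

end HolderDescent

theorem rpow_mul_rpow_mul_rpow_le_add {ν a b t : ℝ} (hν0 : 0 ≤ ν) (hν1 : ν ≤ 1)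
    (ha : 0 ≤ a) (hb : 0 ≤ b) (ht : 0 ≤ t) :
    a ^ ((1 + ν) / 2) * b ^ ((1 - ν) / 2) * t ^ (1 + ν) ≤
      (1 + ν) / 2 * (a * t ^ 2) + (1 - ν) / 2 * b := by
  have hsq : (a * t ^ 2) ^ ((1 + ν) / 2) = a ^ ((1 + ν) / 2) * t ^ (1 + ν) := by
    rw [Real.mul_rpow ha (by positivity), ← Real.rpow_natCast, ← Real.rpow_mul ht]
    congr 2
    push_cast
    ring
  calc a ^ ((1 + ν) / 2) * b ^ ((1 - ν) / 2) * t ^ (1 + ν)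
      = (a * t ^ 2) ^ ((1 + ν) / 2) * b ^ ((1 - ν) / 2) := by rw [hsq]; ring
    _ ≤ _ := Real.geom_mean_le_arith_mean2_weighted (by linarith) (by linarith)
      (by positivity) hb (by ring)

theorem div_one_add_le_rpow_mul_rpow {ν Lν δ L : ℝ} (hν0 : 0 ≤ ν) (hν1 : ν ≤ 1) (hLν : 0 ≤ Lν)
    (hδ : 0 < δ)
    (hL : ((1 - ν) / ((1 + ν) * δ)) ^ ((1 - ν) / (1 + ν)) * Lν ^ (2 / (1 + ν)) ≤ L) :
    Lν / (1 + ν) ≤ (L / (1 + ν)) ^ ((1 + ν) / 2) * (δ / (1 - ν)) ^ ((1 - ν) / 2) := by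
  set c := (1 - ν) / ((1 + ν) * δ)
  have hc : 0 ≤ c := div_nonneg (by linarith) (by positivity)
  have hpos : 0 < 1 + ν := by linarith
  have hLpow : c ^ ((1 - ν) / 2) * Lν ≤ L ^ ((1 + ν) / 2) :=
    calc c ^ ((1 - ν) / 2) * Lν
        = (c ^ ((1 - ν) / (1 + ν)) * Lν ^ (2 / (1 + ν))) ^ ((1 + ν) / 2) := by
          rw [Real.mul_rpow (by positivity) (by positivity), ← Real.rpow_mul hc,
            ← Real.rpow_mul hLν]
          field_simp
          rw [Real.rpow_one]
      _ ≤ L ^ ((1 + ν) / 2) := by gcongr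
  rcases hν1.lt_or_eq with hν1 | rfl
  · have hb : 0 < δ / (1 - ν) := div_pos hδ (by linarith)
    set A := (1 + ν) ^ ((1 + ν) / 2)
    set B := (1 + ν) ^ ((1 - ν) / 2)
    set P := (δ / (1 - ν)) ^ ((1 - ν) / 2)
    have hA : 0 < A := by positivity
    have hB : 0 < B := by positivity
    have hAB : A * B = 1 + ν := by
      rw [← Real.rpow_add hpos]; ring_nf; exact Real.rpow_one _
    have hcBP : c ^ ((1 - ν) / 2) * (B * P) = 1 := by
      rw [← Real.mul_rpow hpos.le hb.le, ← Real.mul_rpow hc (by positivity),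
        show c * ((1 + ν) * (δ / (1 - ν))) = 1 by simp only [c]; field_simp, Real.one_rpow]
    have hL0 : 0 ≤ L := le_trans (by positivity) hL
    rw [Real.div_rpow hL0 hpos.le]
    calc Lν / (1 + ν) = c ^ ((1 - ν) / 2) * (B * P) * Lν / (A * B) := by
          rw [hcBP, one_mul, hAB]
      _ ≤ L ^ ((1 + ν) / 2) * (B * P) / (A * B) := by rw [mul_right_comm]; gcongr
      _ = L ^ ((1 + ν) / 2) / A * P := by field_simp
  · -- at `ν = 1`, `δ / (1 - ν) = 0` and `0 ^ 0 = 1`, so both sides reduce to `Lν ≤ L`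
    norm_num at hLpow ⊢
    gcongr

theorem div_mul_rpow_le_sq_add {ν Lν δ L t : ℝ} (hν0 : 0 ≤ ν) (hν1 : ν ≤ 1) (hLν : 0 ≤ Lν)
    (hδ : 0 < δ)
    (hL : ((1 - ν) / ((1 + ν) * δ)) ^ ((1 - ν) / (1 + ν)) * Lν ^ (2 / (1 + ν)) ≤ L)
    (ht : 0 ≤ t) :
    Lν / (1 + ν) * t ^ (1 + ν) ≤ L / 2 * t ^ 2 + δ / 2 := by
  have hpos : 0 < 1 + ν := by linarith
  have hL0 : 0 ≤ L := le_trans (by positivity) hL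
  have hδν : (1 - ν) / 2 * (δ / (1 - ν)) ≤ δ / 2 := by
    rcases eq_or_ne (1 - ν) 0 with h | h
    · rw [h, zero_div, zero_mul]; positivity
    · exact le_of_eq (by field_simp)
  calc Lν / (1 + ν) * t ^ (1 + ν)
      ≤ (L / (1 + ν)) ^ ((1 + ν) / 2) * (δ / (1 - ν)) ^ ((1 - ν) / 2) * t ^ (1 + ν) := by
        gcongr; exact div_one_add_le_rpow_mul_rpow hν0 hν1 hLν hδ hL
    _ ≤ (1 + ν) / 2 * (L / (1 + ν) * t ^ 2) + (1 - ν) / 2 * (δ / (1 - ν)) :=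
        rpow_mul_rpow_mul_rpow_le_add hν0 hν1 (by positivity) (div_nonneg hδ.le (by linarith)) ht
    _ ≤ L / 2 * t ^ 2 + δ / 2 := by
        rw [show (1 + ν) / 2 * (L / (1 + ν) * t ^ 2) = L / 2 * t ^ 2 by field_simp]
        gcongr

theorem inexact_descent_lemma_holder_general
    {n : ℕ} (f : EuclideanSpace ℝ (Fin n) → ℝ)
    (f' : EuclideanSpace ℝ (Fin n) → EuclideanSpace ℝ (Fin n))
    (ν Lν : ℝ) (hν : ν ∈ Set.Icc (0:ℝ) 1) (hLν : 0 < Lν)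
    (hgrad : ∀ x, HasGradientAt f (f' x) x)
    (hhold : ∀ x y, ‖f' x - f' y‖ ≤ Lν * ‖x - y‖ ^ ν)
    (δ L : ℝ) (hδ : 0 < δ)
    (hLlb : L ≥ ((1 - ν) / ((1 + ν) * δ)) ^ ((1 - ν) / (1 + ν)) * Lν ^ (2 / (1 + ν))) :
    ∀ x y, f y ≤ f x + ⟪f' x, y - x⟫ + L / 2 * ‖y - x‖ ^ 2 + δ := by
  intro x y
  have hdescent := le_add_inner_add_rpow_of_holder hν.1 hgrad hhold x y
  have hpower := div_mul_rpow_le_sq_add hν.1 hν.2 hLν.le hδ hLlb (norm_nonneg (y - x))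
  linarith

/-- Inexact descent lemma for Hölder-continuous gradients: if `f` is convex differentiable
with `‖∇f(x) − ∇f(y)‖ ≤ L_ν‖x − y‖^ν`, `ν ∈ [0,1]`, then for any `δ > 0` and any
`L ≥ ((1−ν)/((1+ν)δ))^((1−ν)/(1+ν)) · L_ν^(2/(1+ν))`, we have
`f(y) ≤ f(x) + ⟪∇f(x), y − x⟫ + (L/2)‖y − x‖² + δ` for all `x, y`. -/
theorem inexact_descent_lemma_holder
    {n : ℕ} (f : EuclideanSpace ℝ (Fin n) → ℝ)
    (f' : EuclideanSpace ℝ (Fin n) → EuclideanSpace ℝ (Fin n))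
    (ν Lν : ℝ) (hν : ν ∈ Set.Icc (0:ℝ) 1) (hLν : 0 < Lν)
    (hconv : ConvexOn ℝ Set.univ f)
    (hgrad : ∀ x, HasGradientAt f (f' x) x)
    (hhold : ∀ x y, ‖f' x - f' y‖ ≤ Lν * ‖x - y‖ ^ ν)
    (δ L : ℝ) (hδ : 0 < δ)
    (hLlb : L ≥ ((1 - ν) / ((1 + ν) * δ)) ^ ((1 - ν) / (1 + ν)) * Lν ^ (2 / (1 + ν))) :
    ∀ x y, f y ≤ f x + ⟪f' x, y - x⟫ + L / 2 * ‖y - x‖ ^ 2 + δ :=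
  inexact_descent_lemma_holder_general f f' ν Lν hν hLν hgrad hhold δ L hδ hLlb
end

section
/- (Relative smoothness sublinear rate.) Suppose f is smooth relative to an essentially smooth convex h with constant L (i.e. L·h − f is convex on the interior of X) and the NoLips/Bregman proximal gradient method is run with step size γ = (1+ν)/(2L), where ν ∈ [0,1] is the symmetry coefficient of h, ν = inf_{x≠u} D_h(x,u)/D_h(u,x). Then for any reference point u in dom h and all N ≥ 1: Ψ(x^N) − Ψ(u) ≤ 2L·D_h(u, x⁰) / (N(1+ν)). -/
/-!
Each NoLips step satisfies, for every `w`, the descent inequality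
`γ (Ψ(x^{k+1}) − Ψ(w)) ≤ D(w, x^k) − D(w, x^{k+1})`: the first-order optimality of `x^{k+1}`
gives the three-point inequality, and relative smoothness together with convexity of `f` turns
it into the bound on `Ψ`, because `γ L = (1 + ν)/2 ≤ 1`. Taking `w = x^k` shows that `Ψ(x^k)` is
non-increasing; taking `w = u` and summing telescopes to `N γ (Ψ(x^N) − Ψ(u)) ≤ D(u, x^0)`.
-/

open RealInnerProductSpace Set

theorem IsMinOn.hasFDerivAt_add_convexOn_nonneg {E : Type*} [NormedAddCommGroup E]
    [NormedSpace ℝ E] {S : Set E} {φ ψ : E → ℝ} {φ' : StrongDual ℝ E} {z w : E}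
    (hmin : IsMinOn (φ + ψ) S z) (hφ : HasFDerivAt φ φ' z) (hψ : ConvexOn ℝ S ψ)
    (hz : z ∈ S) (hw : w ∈ S) : 0 ≤ φ' (w - z) + (ψ w - ψ z) := by
  set c := ψ w - ψ z
  -- on the segment `[z, w]`, `ψ` lies below its chord, so `φ + chord` is still minimal at `z`
  have hline : IsMinOn (fun t : ℝ => φ (z + t • (w - z)) + t * c) (Icc 0 1) 0 := by
    intro t ⟨ht0, ht1⟩
    have hzt : z + t • (w - z) = (1 - t) • z + t • w := by module
    have hchord := hψ.2 hz hw (sub_nonneg.2 ht1) ht0 (by ring)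
    have hle : (φ + ψ) z ≤ (φ + ψ) ((1 - t) • z + t • w) :=
      hmin (hψ.1 hz hw (sub_nonneg.2 ht1) ht0 (by ring))
    simp only [Pi.add_apply, smul_eq_mul] at hle hchord
    show φ (z + (0 : ℝ) • (w - z)) + 0 * c ≤ φ (z + t • (w - z)) + t * c
    rw [hzt, zero_smul, add_zero, zero_mul, add_zero]
    nlinarith
  have hderiv : HasDerivAt (fun t : ℝ => φ (z + t • (w - z)) + t * c) (φ' (w - z) + c) 0 := by
    have hseg : HasDerivAt (fun t : ℝ => z + t • (w - z)) (w - z) 0 := by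
      simpa using ((hasDerivAt_id (0 : ℝ)).smul_const (w - z)).const_add z
    refine HasDerivAt.add ?_ (by simpa using (hasDerivAt_id (0 : ℝ)).mul_const c)
    exact (by simpa using hφ : HasFDerivAt φ φ' (z + (0 : ℝ) • (w - z))).comp_hasDerivAt 0 hseg
  have hone : (1 : ℝ) - 0 ∈ posTangentConeAt (Icc (0 : ℝ) 1) 0 :=
    sub_mem_posTangentConeAt_of_segment_subset (segment_eq_Icc zero_le_one).subset
  simpa using hline.localize.hasFDerivWithinAt_nonneg hderiv.hasFDerivAt.hasFDerivWithinAt hone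

theorem ConvexOn.inner_gradient_le_sub {E : Type*} [NormedAddCommGroup E]
    [InnerProductSpace ℝ E] [CompleteSpace E] {S : Set E} {φ : E → ℝ} {g z w : E}
    (hφ : ConvexOn ℝ S φ) (hg : HasGradientAt φ g z) (hz : z ∈ S) (hw : w ∈ S) :
    ⟪g, w - z⟫ ≤ φ w - φ z := by
  -- `z` trivially minimises `(-φ) + φ = 0`
  have hmin : IsMinOn (-φ + φ) S z := fun u _ => by simp
  have := hmin.hasFDerivAt_add_convexOn_nonneg (hasGradientAt_iff_hasFDerivAt.1 hg).neg hφ hz hw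
  simp only [neg_apply, InnerProductSpace.toDual_apply_apply, le_neg_add_iff_add_le,
    add_zero] at this
  exact this

section Bregman

variable {E : Type*} [NormedAddCommGroup E] [InnerProductSpace ℝ E]

def bregmanDiv (h : E → ℝ) (h' : E → E) (u x : E) : ℝ := h u - h x - ⟪h' x, u - x⟫

variable {S : Set E} {h r : E → ℝ} {h' : E → E} {x z w : E}

@[simp]
theorem bregmanDiv_self (x : E) : bregmanDiv h h' x x = 0 := by simp [bregmanDiv]

theorem bregmanDiv_nonneg [CompleteSpace E] (hh : ConvexOn ℝ S h)
    (hx' : HasGradientAt h (h' x) x) (hx : x ∈ S) (hw : w ∈ S) : 0 ≤ bregmanDiv h h' w x :=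
  sub_nonneg.2 (hh.inner_gradient_le_sub hx' hx hw)

theorem bregmanDiv_three_point (h : E → ℝ) (h' : E → E) (w x z : E) :
    bregmanDiv h h' w x - bregmanDiv h h' w z - bregmanDiv h h' z x = ⟪h' z - h' x, w - z⟫ := by
  simp only [bregmanDiv, inner_sub_left, inner_sub_right]
  ring

theorem IsMinOn.bregman_three_point_le [CompleteSpace E] {g : E} {γ : ℝ}
    (hmin : IsMinOn (fun u => γ * ⟪g, u⟫ + γ * r u + bregmanDiv h h' u x) S z) (hγ : 0 ≤ γ)
    (hr : ConvexOn ℝ S r) (hz' : HasGradientAt h (h' z) z) (hz : z ∈ S) (hw : w ∈ S) :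
    γ * (⟪g, z - w⟫ + (r z - r w)) ≤
      bregmanDiv h h' w x - bregmanDiv h h' w z - bregmanDiv h h' z x := by
  have hsum : IsMinOn ((fun u => γ * ⟪g, u⟫ + bregmanDiv h h' u x) + fun u => γ * r u) S z :=
    isMinOn_iff.2 fun u hu => by
      have := isMinOn_iff.1 hmin u hu
      simp only [Pi.add_apply] at this ⊢
      linarith
  -- the smooth part `u ↦ γ ⟪g, u⟫ + D(u, x)` has gradient `γ g + h'(z) - h'(x)` at `z`
  have hsmooth := (((innerSL ℝ g).hasFDerivAt (x := z)).const_mul γ).add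
    (((hasGradientAt_iff_hasFDerivAt.1 hz').sub_const (h x)).sub
      ((innerSL ℝ (h' x)).hasFDerivAt.comp z ((hasFDerivAt_id z).sub_const x)))
  have hopt := hsum.hasFDerivAt_add_convexOn_nonneg hsmooth (hr.smul hγ) hz hw
  rw [bregmanDiv_three_point]
  simp only [ContinuousLinearMap.comp_id, add_apply, smul_apply, coe_innerSL_apply, smul_eq_mul,
    sub_apply, InnerProductSpace.toDual_apply_apply] at hopt
  rw [inner_sub_left, ← neg_sub w z, inner_neg_right]
  linarith

theorem bregman_prox_grad_descent [CompleteSpace E] {f : E → ℝ} {f' : E → E} {γ L : ℝ}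
    (hmin : IsMinOn (fun u => γ * ⟪f' x, u⟫ + γ * r u + bregmanDiv h h' u x) S z)
    (hγ : 0 ≤ γ) (hγL : γ * L ≤ 1)
    (hrel : f z ≤ f x + ⟪f' x, z - x⟫ + L * bregmanDiv h h' z x)
    (hf : ConvexOn ℝ S f) (hr : ConvexOn ℝ S r) (hh : ConvexOn ℝ S h)
    (hx' : HasGradientAt f (f' x) x) (hxh' : HasGradientAt h (h' x) x)
    (hz' : HasGradientAt h (h' z) z) (hx : x ∈ S) (hz : z ∈ S) (hw : w ∈ S) :
    γ * (f z + r z - (f w + r w)) ≤ bregmanDiv h h' w x - bregmanDiv h h' w z := by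
  have hprox := hmin.bregman_three_point_le hγ hr hz' hz hw
  have hfw := hf.inner_gradient_le_sub hx' hx hw
  have hDzx := bregmanDiv_nonneg hh hxh' hx hz
  have hsplit : ⟪f' x, z - x⟫ = ⟪f' x, z - w⟫ + ⟪f' x, w - x⟫ := by
    rw [← inner_add_right, sub_add_sub_cancel]
  have hgap : f z + r z - (f w + r w) ≤
      ⟪f' x, z - w⟫ + (r z - r w) + L * bregmanDiv h h' z x := by
    linarith
  have hLD : γ * (L * bregmanDiv h h' z x) ≤ bregmanDiv h h' z x := by
    rw [← mul_assoc]
    exact mul_le_of_le_one_left hDzx hγL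
  calc γ * (f z + r z - (f w + r w))
      ≤ γ * (⟪f' x, z - w⟫ + (r z - r w)) + γ * (L * bregmanDiv h h' z x) := by
        rw [← mul_add]
        exact mul_le_mul_of_nonneg_left hgap hγ
    _ ≤ (bregmanDiv h h' w x - bregmanDiv h h' w z - bregmanDiv h h' z x) +
        bregmanDiv h h' z x := add_le_add hprox hLD
    _ = bregmanDiv h h' w x - bregmanDiv h h' w z := by ring

end Bregman

theorem Antitone.nat_mul_sub_le_of_le_sub_succ {a d : ℕ → ℝ} {c γ : ℝ} (ha : Antitone a)
    (hγ : 0 ≤ γ) (hd : ∀ k, 0 ≤ d k) (hstep : ∀ k, γ * (a (k + 1) - c) ≤ d k - d (k + 1))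
    (N : ℕ) : N * γ * (a N - c) ≤ d 0 := by
  suffices h : ∀ N : ℕ, N * γ * (a N - c) ≤ d 0 - d N by linarith [h N, hd N]
  intro N
  induction N with
  | zero => simp
  | succ N ih =>
    have hmono : N * γ * a (N + 1) ≤ N * γ * a N :=
      mul_le_mul_of_nonneg_left (ha N.le_succ) (by positivity)
    push_cast
    linarith [hstep N]

theorem nolips_sublinear_rate_general
    {n : ℕ} (S : Set (EuclideanSpace ℝ (Fin n))) (hSconv : Convex ℝ S)
    (f r : EuclideanSpace ℝ (Fin n) → ℝ)
    (f' : EuclideanSpace ℝ (Fin n) → EuclideanSpace ℝ (Fin n))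
    (hfconv : ConvexOn ℝ Set.univ f)
    (hfgrad : ∀ x ∈ interior S, HasGradientAt f (f' x) x)
    (hrconv : ConvexOn ℝ Set.univ r)
    (h : EuclideanSpace ℝ (Fin n) → ℝ)
    (h' : EuclideanSpace ℝ (Fin n) → EuclideanSpace ℝ (Fin n))
    (hhconv : ConvexOn ℝ S h)
    (hhgrad : ∀ x ∈ interior S, HasGradientAt h (h' x) x)
    (D : EuclideanSpace ℝ (Fin n) → EuclideanSpace ℝ (Fin n) → ℝ)
    (hD : ∀ u x, D u x = h u - h x - ⟪h' x, u - x⟫)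
    (L : ℝ) (hL : 0 < L)
    (hrel : ∀ x ∈ interior S, ∀ u ∈ interior S,
      f u ≤ f x + ⟪f' x, u - x⟫ + L * D u x)
    (ν : ℝ) (hν : ν ∈ Set.Icc (0:ℝ) 1)
    (γ : ℝ) (hγ : γ = (1 + ν) / (2 * L))
    (x : ℕ → EuclideanSpace ℝ (Fin n)) (hx0 : x 0 ∈ interior S)
    (hiter : ∀ k, x (k + 1) ∈ interior S ∧
      IsMinOn (fun u => γ * ⟪f' (x k), u⟫ + γ * r u + D u (x k)) S (x (k + 1))) :
    ∀ u ∈ S, ∀ N : ℕ, 1 ≤ N →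
      (f (x N) + r (x N)) - (f u + r u) ≤ 2 * L * D u (x 0) / (N * (1 + ν)) := by
  intro u hu N hN
  obtain rfl : D = bregmanDiv h h' := funext₂ hD
  obtain ⟨hν0, hν1⟩ := hν
  have hγ0 : 0 < γ := hγ ▸ by positivity
  have hγL : γ * L ≤ 1 := by rw [hγ]; field_simp; linarith
  have hint : ∀ k, x k ∈ interior S := fun k => k.casesOn hx0 fun k => (hiter k).1
  have hmem : ∀ k, x k ∈ S := fun k => interior_subset (hint k)
  have hdescent : ∀ k, ∀ w ∈ S, γ * (f (x (k + 1)) + r (x (k + 1)) - (f w + r w)) ≤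
      bregmanDiv h h' w (x k) - bregmanDiv h h' w (x (k + 1)) := fun k w hw =>
    bregman_prox_grad_descent (hiter k).2 hγ0.le hγL (hrel _ (hint k) _ (hint (k + 1)))
      (hfconv.subset (subset_univ S) hSconv) (hrconv.subset (subset_univ S) hSconv) hhconv
      (hfgrad _ (hint k)) (hhgrad _ (hint k)) (hhgrad _ (hint (k + 1))) (hmem k) (hmem (k + 1)) hw
  have hanti : Antitone fun k => f (x k) + r (x k) := antitone_nat_of_succ_le fun k => by
    have := hdescent k (x k) (hmem k)
    rw [bregmanDiv_self] at this
    have := bregmanDiv_nonneg hhconv (hhgrad _ (hint (k + 1))) (hmem (k + 1)) (hmem k)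
    nlinarith
  have hrate := hanti.nat_mul_sub_le_of_le_sub_succ hγ0.le
    (fun k => bregmanDiv_nonneg hhconv (hhgrad _ (hint k)) (hmem k) hu) (fun k => hdescent k u hu) N
  have hN0 : (0 : ℝ) < N := by exact_mod_cast hN
  rw [le_div_iff₀ (by positivity)]
  rw [hγ] at hrate
  field_simp at hrate
  linarith

/-- NoLips / Bregman proximal gradient under relative smoothness: if `L·h − f` is convex
(i.e. `f(u) ≤ f(x) + ⟪∇f(x), u−x⟫ + L·D_h(u,x)`), `ν ∈ [0,1]` is a lower bound for the
symmetry coefficient of `h` (`ν·D_h(u,x) ≤ D_h(x,u)`), and the method is run with step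
`γ = (1+ν)/(2L)`, then for every `u ∈ dom h` and `N ≥ 1`,
`Ψ(x^N) − Ψ(u) ≤ 2L·D_h(u, x⁰)/(N(1+ν))` where `Ψ = f + r`. -/
theorem nolips_sublinear_rate
    {n : ℕ} (S : Set (EuclideanSpace ℝ (Fin n))) (hS : S.Nonempty) (hSconv : Convex ℝ S)
    (f r : EuclideanSpace ℝ (Fin n) → ℝ)
    (f' : EuclideanSpace ℝ (Fin n) → EuclideanSpace ℝ (Fin n))
    (hfconv : ConvexOn ℝ Set.univ f)
    (hfgrad : ∀ x ∈ interior S, HasGradientAt f (f' x) x)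
    (hrconv : ConvexOn ℝ Set.univ r) (hrlsc : LowerSemicontinuous r)
    (h : EuclideanSpace ℝ (Fin n) → ℝ)
    (h' : EuclideanSpace ℝ (Fin n) → EuclideanSpace ℝ (Fin n))
    (hhconv : ConvexOn ℝ S h)
    (hhgrad : ∀ x ∈ interior S, HasGradientAt h (h' x) x)
    (D : EuclideanSpace ℝ (Fin n) → EuclideanSpace ℝ (Fin n) → ℝ)
    (hD : ∀ u x, D u x = h u - h x - ⟪h' x, u - x⟫)
    (L : ℝ) (hL : 0 < L)
    (hrel : ∀ x ∈ interior S, ∀ u ∈ interior S,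
      f u ≤ f x + ⟪f' x, u - x⟫ + L * D u x)
    (ν : ℝ) (hν : ν ∈ Set.Icc (0:ℝ) 1)
    (hsym : ∀ x ∈ interior S, ∀ u ∈ interior S, x ≠ u → ν * D u x ≤ D x u)
    (γ : ℝ) (hγ : γ = (1 + ν) / (2 * L))
    (x : ℕ → EuclideanSpace ℝ (Fin n)) (hx0 : x 0 ∈ interior S)
    (hiter : ∀ k, x (k + 1) ∈ interior S ∧
      IsMinOn (fun u => γ * ⟪f' (x k), u⟫ + γ * r u + D u (x k)) S (x (k + 1))) :
    ∀ u ∈ S, ∀ N : ℕ, 1 ≤ N →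
      (f (x N) + r (x N)) - (f u + r u) ≤ 2 * L * D u (x 0) / (N * (1 + ν)) :=
  nolips_sublinear_rate_general S hSconv f r f' hfconv hfgrad hrconv h h' hhconv hhgrad D hD L hL
    hrel ν hν γ hγ x hx0 hiter
end

section
/- (Conditional gradient O(1/k) rate with adaptive step size.) Consider minimizing Ψ = f + r over a compact convex set X with diameter Ω (so ‖x−u‖ ≤ Ω for all x,u ∈ X), where f is convex with L_f-Lipschitz gradient and r is convex. Suppose the sequence s_k ≥ 0 satisfies s_k ≤ max{ s_{k−1}/2, s_{k−1} − s_{k−1}²/(2 L_f Ω²) } for all k ≥ 1. Then s_k ≤ 2·max{s₀, L_f Ω²}/k for all k ≥ 1. -/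
/-- Conditional gradient `O(1/k)` rate: if a nonnegative sequence satisfies
`s_k ≤ max{s_{k−1}/2, s_{k−1} − s_{k−1}²/(2 L_f Ω²)}` for all `k ≥ 1`, then
`s_k ≤ 2·max{s₀, L_f Ω²}/k` for all `k ≥ 1`. -/
theorem conditional_gradient_rate_recursion
    (Lf Ω : ℝ) (hLf : 0 < Lf) (hΩ : 0 < Ω)
    (s : ℕ → ℝ) (hs : ∀ k, 0 ≤ s k)
    (hrec : ∀ k : ℕ, 1 ≤ k →
      s k ≤ max (s (k - 1) / 2) (s (k - 1) - (s (k - 1)) ^ 2 / (2 * Lf * Ω ^ 2))) :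
    ∀ k : ℕ, 1 ≤ k → s k ≤ 2 * max (s 0) (Lf * Ω ^ 2) / k := by
  set C := max (s 0) (Lf * Ω ^ 2) with hCdef
  have hC : 0 < C := lt_of_lt_of_le (by positivity) (le_max_right _ _)
  have hM : 0 < 2 * Lf * Ω ^ 2 := by positivity
  have hMC : 2 * Lf * Ω ^ 2 ≤ 2 * C := by
    have := le_max_right (s 0) (Lf * Ω ^ 2)
    linarith
  -- key: from `a ≥ 0`, `a ≤ 2C/k` deduce both branch bounds
  intro k hk
  induction k, hk using Nat.le_induction with
  | base =>
      have h := hrec 1 le_rfl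
      simp only [Nat.sub_self] at h
      have hs0 : s 0 ≤ C := le_max_left _ _
      have hsq : 0 ≤ (s 0) ^ 2 / (2 * Lf * Ω ^ 2) := by positivity
      have : s 1 ≤ C := le_trans h (max_le (by linarith) (by linarith))
      push_cast
      linarith
  | succ k hk ih =>
      have h := hrec (k + 1) (by omega)
      simp only [Nat.add_sub_cancel] at h
      have hkr : (1 : ℝ) ≤ (k : ℝ) := by exact_mod_cast hk
      have hkpos : (0 : ℝ) < (k : ℝ) := by linarith
      have hk1pos : (0 : ℝ) < (k : ℝ) + 1 := by linarith
      set a := s k with ha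
      have ha0 : 0 ≤ a := hs k
      have hak : a * k ≤ 2 * C := by
        rw [le_div_iff₀ hkpos] at ih
        linarith
      have ha2C : a ≤ 2 * C := by nlinarith
      push_cast
      have hprod : 0 ≤ (2 * C - a * k) * (2 * C - a) := by nlinarith
      refine le_trans h (max_le ?_ ?_) <;> rw [le_div_iff₀ hk1pos]
      · nlinarith
      · have hq : a ^ 2 / (2 * C) ≤ a ^ 2 / (2 * Lf * Ω ^ 2) :=
          div_le_div_of_nonneg_left (sq_nonneg a) hM hMC
        have h1 : a - a ^ 2 / (2 * Lf * Ω ^ 2) ≤ a - a ^ 2 / (2 * C) := by linarith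
        refine le_trans (mul_le_mul_of_nonneg_right h1 hk1pos.le) ?_
        have e : a - a ^ 2 / (2 * C) = (2 * C * a - a ^ 2) / (2 * C) := by
          field_simp
        rw [e, div_mul_eq_mul_div, div_le_iff₀ (by positivity : (0:ℝ) < 2 * C)]
        nlinarith [hprod, sq_nonneg a]
end

section
/- (Nesterov smoothing gives Lipschitz gradient.) With the notation of the smoothing setup, assume additionally h_w is 1-strongly convex on W with respect to a norm ‖·‖_E. Then the function Φ_τ(x) = max_{w∈W} {⟨A x, w⟩ − κ(w) − τ h_w(w)} is convex, continuously differentiable with ∇Φ_τ(x) = A* ŵ_τ(x) where ŵ_τ(x) is the unique maximizer, and ∇Φ_τ is Lipschitz continuous with constant ‖A‖²/τ, where ‖A‖ = max{⟨Ax, w⟩ : ‖x‖_V = 1, ‖w‖_E = 1}. -/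
open RealInnerProductSpace

/-- Nesterov smoothing: if `h_w` is 1-strongly convex on the compact convex set `W`, then
`Φ_τ(x) = max_{w∈W} {⟪Ax,w⟫ − κ(w) − τ h_w(w)}` is convex, differentiable with gradient
`∇Φ_τ(x) = A* ŵ_τ(x)` (where `ŵ_τ(x)` is the unique maximizer), and `∇Φ_τ` is
Lipschitz with constant `‖A‖²/τ`. -/
theorem nesterov_smoothing_lipschitz_gradient
    {V E : Type*} [NormedAddCommGroup V] [InnerProductSpace ℝ V] [FiniteDimensional ℝ V]
    [NormedAddCommGroup E] [InnerProductSpace ℝ E] [FiniteDimensional ℝ E]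
    (W : Set E) (hW : W.Nonempty) (hWcompact : IsCompact W) (hWconv : Convex ℝ W)
    (A : V →L[ℝ] E) (κ : E → ℝ) (hκcont : ContinuousOn κ W) (hκconv : ConvexOn ℝ W κ)
    (hw : E → ℝ) (hwcont : ContinuousOn hw W)
    (hwstrong : ∀ w₁ ∈ W, ∀ w₂ ∈ W, ∀ t ∈ Set.Icc (0:ℝ) 1,
      hw (t • w₁ + (1 - t) • w₂) ≤ t * hw w₁ + (1 - t) * hw w₂
        - t * (1 - t) / 2 * ‖w₁ - w₂‖ ^ 2)
    (τ : ℝ) (hτ : 0 < τ)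
    (what : V → E)
    (hwhat : ∀ x, what x ∈ W ∧
      IsMaxOn (fun w => ⟪A x, w⟫ - κ w - τ * hw w) W (what x) ∧
      ∀ w ∈ W, IsMaxOn (fun w' => ⟪A x, w'⟫ - κ w' - τ * hw w') W w → w = what x)
    (Φ : V → ℝ)
    (hΦ : ∀ x, Φ x = ⟪A x, what x⟫ - κ (what x) - τ * hw (what x)) :
    ConvexOn ℝ Set.univ Φ
      ∧ (∀ x, HasGradientAt Φ ((ContinuousLinearMap.adjoint A) (what x)) x)
      ∧ LipschitzWith (Real.toNNReal (‖A‖ ^ 2 / τ))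
          (fun x => (ContinuousLinearMap.adjoint A) (what x)) := by

  have hmax : ∀ x, ∀ w ∈ W, ⟪A x, w⟫ - κ w - τ * hw w
      ≤ ⟪A x, what x⟫ - κ (what x) - τ * hw (what x) := by
    intro x w hwmem
    exact isMaxOn_iff.mp (hwhat x).2.1 w hwmem
  -- Key strong-concavity estimate at the maximizer
  have key : ∀ x, ∀ w ∈ W, τ / 2 * ‖w - what x‖ ^ 2 ≤
      (⟪A x, what x⟫ - κ (what x) - τ * hw (what x)) - (⟪A x, w⟫ - κ w - τ * hw w) := by
    intro x w hwmem
    obtain ⟨hmem, hmax', -⟩ := hwhat x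
    set D := ‖w - what x‖ ^ 2 with hD_def
    have hD : 0 ≤ D := by positivity
    have hstep : ∀ t, 0 < t → t < 1 →
        τ * (1 - t) / 2 * D ≤
        (⟪A x, what x⟫ - κ (what x) - τ * hw (what x)) - (⟪A x, w⟫ - κ w - τ * hw w) := by
      intro t ht0 ht1
      have hab : t + (1 - t) = 1 := by ring
      have hmemu : t • w + (1 - t) • what x ∈ W :=
        hWconv hwmem hmem (le_of_lt ht0) (by linarith) hab
      have hκ' : κ (t • w + (1 - t) • what x) ≤ t * κ w + (1 - t) * κ (what x) := by
        have := hκconv.2 hwmem hmem (le_of_lt ht0) (by linarith : (0:ℝ) ≤ 1 - t) hab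
        simpa [smul_eq_mul] using this
      have hhw' : hw (t • w + (1 - t) • what x) ≤
          t * hw w + (1 - t) * hw (what x) - t * (1 - t) / 2 * D := by
        simpa [hD_def] using hwstrong w hwmem (what x) hmem t ⟨le_of_lt ht0, le_of_lt ht1⟩
      have hinner : ⟪A x, t • w + (1 - t) • what x⟫
          = t * ⟪A x, w⟫ + (1 - t) * ⟪A x, what x⟫ := by
        rw [inner_add_right, real_inner_smul_right, real_inner_smul_right]
      have hmaxu := isMaxOn_iff.mp hmax' _ hmemu
      simp only [hinner] at hmaxu
      have hτh : τ * hw (t • w + (1 - t) • what x) ≤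
          τ * (t * hw w + (1 - t) * hw (what x) - t * (1 - t) / 2 * D) :=
        mul_le_mul_of_nonneg_left hhw' (le_of_lt hτ)
      have hmul : t * (τ * (1 - t) / 2 * D) ≤
          t * ((⟪A x, what x⟫ - κ (what x) - τ * hw (what x))
            - (⟪A x, w⟫ - κ w - τ * hw w)) := by nlinarith
      exact le_of_mul_le_mul_left (by linarith [hmul]) ht0
    have hb : 0 ≤ (⟪A x, what x⟫ - κ (what x) - τ * hw (what x))
        - (⟪A x, w⟫ - κ w - τ * hw w) := by
      have := isMaxOn_iff.mp hmax' w hwmem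
      linarith
    rcases eq_or_lt_of_le hD with hD0 | hD0
    · rw [← hD0]
      simpa using hb
    · apply le_of_forall_pos_le_add
      intro ε hε
      have ha : 0 < τ / 2 * D := by positivity
      set t := min (1/2 : ℝ) (ε / (τ / 2 * D)) with ht_def
      have ht0 : 0 < t := lt_min (by norm_num) (div_pos hε ha)
      have ht1 : t < 1 := lt_of_le_of_lt (min_le_left _ _) (by norm_num)
      have hstep' := hstep t ht0 ht1
      have hta : (τ / 2 * D) * t ≤ ε := by
        have h1 : t ≤ ε / (τ / 2 * D) := min_le_right _ _
        calc (τ / 2 * D) * t ≤ (τ / 2 * D) * (ε / (τ / 2 * D)) :=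
              mul_le_mul_of_nonneg_left h1 (le_of_lt ha)
          _ = ε := by field_simp
      nlinarith
  -- what is (‖A‖/τ)-Lipschitz
  have hwdist : ∀ x y, ‖what x - what y‖ ≤ ‖A‖ / τ * ‖x - y‖ := by
    intro x y
    have h1 := key x (what y) (hwhat y).1
    have h2 := key y (what x) (hwhat x).1
    rw [show ‖what y - what x‖ = ‖what x - what y‖ from norm_sub_rev _ _] at h1
    have hsum : ((⟪A x, what x⟫ - κ (what x) - τ * hw (what x))
          - (⟪A x, what y⟫ - κ (what y) - τ * hw (what y)))
        + ((⟪A y, what y⟫ - κ (what y) - τ * hw (what y))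
          - (⟪A y, what x⟫ - κ (what x) - τ * hw (what x)))
        = ⟪A x - A y, what x - what y⟫ := by
      rw [inner_sub_left, inner_sub_right, inner_sub_right]; ring
    have hip : ⟪A x - A y, what x - what y⟫ ≤ ‖A‖ * ‖x - y‖ * ‖what x - what y‖ := by
      calc ⟪A x - A y, what x - what y⟫ ≤ ‖A x - A y‖ * ‖what x - what y‖ :=
            real_inner_le_norm _ _
        _ ≤ ‖A‖ * ‖x - y‖ * ‖what x - what y‖ := by
            have h3 : ‖A x - A y‖ ≤ ‖A‖ * ‖x - y‖ := by
              rw [← map_sub]; exact A.le_opNorm _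
            exact mul_le_mul_of_nonneg_right h3 (norm_nonneg _)
    have hkey : τ * ‖what x - what y‖ ^ 2 ≤ ‖A‖ * ‖x - y‖ * ‖what x - what y‖ := by
      nlinarith
    rcases eq_or_lt_of_le (norm_nonneg (what x - what y)) with h0 | h0
    · rw [← h0]; positivity
    · rw [div_mul_eq_mul_div, le_div_iff₀ hτ]
      nlinarith
  -- Lipschitz part
  have hC : (0:ℝ) ≤ ‖A‖ ^ 2 / τ := by positivity
  have hlip : LipschitzWith (Real.toNNReal (‖A‖ ^ 2 / τ))
      (fun x => (ContinuousLinearMap.adjoint A) (what x)) := by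
    apply LipschitzWith.of_dist_le_mul
    intro x y
    rw [Real.coe_toNNReal _ hC, dist_eq_norm, dist_eq_norm]
    calc ‖(ContinuousLinearMap.adjoint A) (what x) - (ContinuousLinearMap.adjoint A) (what y)‖
        = ‖(ContinuousLinearMap.adjoint A) (what x - what y)‖ := by rw [map_sub]
      _ ≤ ‖(ContinuousLinearMap.adjoint A)‖ * ‖what x - what y‖ :=
          ContinuousLinearMap.le_opNorm _ _
      _ = ‖A‖ * ‖what x - what y‖ := by
          rw [LinearIsometryEquiv.norm_map ContinuousLinearMap.adjoint A]
      _ ≤ ‖A‖ * (‖A‖ / τ * ‖x - y‖) :=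
          mul_le_mul_of_nonneg_left (hwdist x y) (norm_nonneg _)
      _ = ‖A‖ ^ 2 / τ * ‖x - y‖ := by ring
  -- quadratic error bound for the gradient
  have hbound : ∀ x y, |Φ y - Φ x - ⟪(ContinuousLinearMap.adjoint A) (what x), y - x⟫|
      ≤ ‖A‖ ^ 2 / τ * ‖y - x‖ ^ 2 := by
    intro x y
    have hinner : ⟪(ContinuousLinearMap.adjoint A) (what x), y - x⟫ = ⟪A (y - x), what x⟫ := by
      rw [ContinuousLinearMap.adjoint_inner_left, real_inner_comm]
    have hlower : Φ x + ⟪A (y - x), what x⟫ ≤ Φ y := by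
      have h1 := hmax y (what x) (hwhat x).1
      rw [hΦ x, hΦ y]
      have h2 : ⟪A (y - x), what x⟫ = ⟪A y, what x⟫ - ⟪A x, what x⟫ := by
        rw [map_sub, inner_sub_left]
      linarith
    have hupper : Φ y ≤ Φ x + ⟪A (y - x), what y⟫ := by
      have h1 := hmax x (what y) (hwhat y).1
      rw [hΦ x, hΦ y]
      have h2 : ⟪A (y - x), what y⟫ = ⟪A y, what y⟫ - ⟪A x, what y⟫ := by
        rw [map_sub, inner_sub_left]
      linarith
    have hdiff : ⟪A (y - x), what y⟫ - ⟪A (y - x), what x⟫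
        ≤ ‖A‖ ^ 2 / τ * ‖y - x‖ ^ 2 := by
      have h3 : ⟪A (y - x), what y⟫ - ⟪A (y - x), what x⟫
          = ⟪A (y - x), what y - what x⟫ := by rw [inner_sub_right]
      rw [h3]
      calc ⟪A (y - x), what y - what x⟫ ≤ ‖A (y - x)‖ * ‖what y - what x‖ :=
            real_inner_le_norm _ _
        _ ≤ (‖A‖ * ‖y - x‖) * (‖A‖ / τ * ‖y - x‖) := by
            apply mul_le_mul (A.le_opNorm _) (hwdist y x) (norm_nonneg _)
            positivity
        _ = ‖A‖ ^ 2 / τ * ‖y - x‖ ^ 2 := by ring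
    rw [hinner, abs_le]
    constructor
    · have : (0:ℝ) ≤ ‖A‖ ^ 2 / τ * ‖y - x‖ ^ 2 := by positivity
      linarith
    · linarith
  have hgrad : ∀ x, HasGradientAt Φ ((ContinuousLinearMap.adjoint A) (what x)) x := by
    intro x
    rw [hasGradientAt_iff_isLittleO, Asymptotics.isLittleO_iff]
    intro c hc
    rw [Metric.eventually_nhds_iff]
    refine ⟨c / (‖A‖ ^ 2 / τ + 1), by positivity, ?_⟩
    intro y hy
    rw [dist_eq_norm] at hy
    have h1 := hbound x y
    have h2 : ‖A‖ ^ 2 / τ * ‖y - x‖ ^ 2 ≤ c * ‖y - x‖ := by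
      have h3 : ‖A‖ ^ 2 / τ * ‖y - x‖ ≤ c := by
        have h4 : ‖A‖ ^ 2 / τ * ‖y - x‖ ≤ (‖A‖ ^ 2 / τ + 1) * ‖y - x‖ :=
          mul_le_mul_of_nonneg_right (by linarith) (norm_nonneg _)
        have h5 : (‖A‖ ^ 2 / τ + 1) * ‖y - x‖ ≤ c := by
          rw [← le_div_iff₀' (by positivity)]
          exact le_of_lt hy
        linarith
      nlinarith [norm_nonneg (y - x)]
    calc ‖Φ y - Φ x - ⟪(ContinuousLinearMap.adjoint A) (what x), y - x⟫‖
        = |Φ y - Φ x - ⟪(ContinuousLinearMap.adjoint A) (what x), y - x⟫| := rfl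
      _ ≤ ‖A‖ ^ 2 / τ * ‖y - x‖ ^ 2 := h1
      _ ≤ c * ‖y - x‖ := h2
  -- convexity
  have hconv : ConvexOn ℝ Set.univ Φ := by
    refine ⟨convex_univ, ?_⟩
    intro x _ y _ a b ha hb hab
    simp only [smul_eq_mul]
    set z := a • x + b • y with hz
    have hmemz := (hwhat z).1
    have hexp : Φ z = a * (⟪A x, what z⟫ - κ (what z) - τ * hw (what z))
        + b * (⟪A y, what z⟫ - κ (what z) - τ * hw (what z)) := by
      rw [hΦ z]
      have : ⟪A z, what z⟫ = a * ⟪A x, what z⟫ + b * ⟪A y, what z⟫ := by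
        rw [hz, map_add, map_smul, map_smul, inner_add_left,
          real_inner_smul_left, real_inner_smul_left]
      rw [this]
      linear_combination (κ (what z) + τ * hw (what z)) * hab
    have h1 : ⟪A x, what z⟫ - κ (what z) - τ * hw (what z) ≤ Φ x := by
      rw [hΦ x]; exact hmax x (what z) hmemz
    have h2 : ⟪A y, what z⟫ - κ (what z) - τ * hw (what z) ≤ Φ y := by
      rw [hΦ y]; exact hmax y (what z) hmemz
    rw [hexp]
    have := mul_le_mul_of_nonneg_left h1 ha
    have := mul_le_mul_of_nonneg_left h2 hb
    linarith
  exact ⟨hconv, hgrad, hlip⟩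
end
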